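/- For every positive integer k, all diagonal entries of C_k^{-1} equal 1 + k/3. -/
import Mathlib

open Matrix

/-- All-ones matrix of size `2^k × 2^k`. -/
def Jmat (k : ℕ) : Matrix (Fin (2^k)) (Fin (2^k)) ℝ := Matrix.of fun _ _ => 1

/-- The recursively defined correlation matrices: `Cmat 1 = [[1,-1/2],[-1/2,1]]` and
`Cmat (k+1) = [[Cmat k, -J_k/2^(2k+1)], [-J_k/2^(2k+1), Cmat k]]`.  (`Cmat 0` is the
`1×1` matrix `[1]`, which makes the recursion start correctly at `k = 1`.) -/
noncomputable def Cmat : (k : ℕ) → Matrix (Fin (2^k)) (Fin (2^k)) ℝ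
  | 0 => Matrix.of fun _ _ => 1
  | (k+1) =>
      Matrix.reindex (finSumFinEquiv.trans (finCongr (by ring : 2^k + 2^k = 2^(k+1)))) (finSumFinEquiv.trans (finCongr (by ring : 2^k + 2^k = 2^(k+1))))
        (Matrix.fromBlocks (Cmat k) (-((1:ℝ)/2^(2*k+1)) • Jmat k)
          (-((1:ℝ)/2^(2*k+1)) • Jmat k) (Cmat k))

def eqv (k : ℕ) : Fin (2^k) ⊕ Fin (2^k) ≃ Fin (2^(k+1)) :=
  finSumFinEquiv.trans (finCongr (by ring : 2^k + 2^k = 2^(k+1)))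

noncomputable def Nmat : (k : ℕ) → Matrix (Fin (2^k)) (Fin (2^k)) ℝ
  | 0 => Matrix.of fun _ _ => 1
  | (k+1) =>
      Matrix.reindex (eqv k) (eqv k)
        (Matrix.fromBlocks (Nmat k + ((1:ℝ)/3) • Jmat k) (((2:ℝ)/3) • Jmat k)
          (((2:ℝ)/3) • Jmat k) (Nmat k + ((1:ℝ)/3) • Jmat k))

lemma Cmat_succ (k : ℕ) : Cmat (k+1) =
    Matrix.reindex (eqv k) (eqv k)
      (Matrix.fromBlocks (Cmat k) (-((1:ℝ)/2^(2*k+1)) • Jmat k)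
        (-((1:ℝ)/2^(2*k+1)) • Jmat k) (Cmat k)) := rfl

lemma Jsplit (k : ℕ) : Jmat (k+1) =
    Matrix.reindex (eqv k) (eqv k)
      (Matrix.fromBlocks (Jmat k) (Jmat k) (Jmat k) (Jmat k)) := by
  ext i j
  simp only [reindex_apply, submatrix_apply]
  rcases (eqv k).symm i with a | a <;> rcases (eqv k).symm j with b | b <;> rfl

lemma reindex_mul {α : Type*} [Fintype α] [DecidableEq α] {m : ℕ} (e : α ≃ Fin m)
    (A B : Matrix α α ℝ) :
    (Matrix.reindex e e A) * (Matrix.reindex e e B) = Matrix.reindex e e (A * B) := by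
  simp [reindex_apply, Matrix.submatrix_mul_equiv]

lemma reindex_smul {α : Type*} {m : ℕ} (e : α ≃ Fin m) (c : ℝ) (A : Matrix α α ℝ) :
    c • Matrix.reindex e e A = Matrix.reindex e e (c • A) := by
  ext i j; simp

lemma h2pow (k : ℕ) : (2:ℝ)^(2*k+1) = 2^k * 2^k * 2 := by
  rw [pow_succ, two_mul, pow_add]

lemma JJ (k : ℕ) : Jmat k * Jmat k = ((2:ℝ)^k) • Jmat k := by
  ext i j
  simp [Jmat, Matrix.mul_apply, Finset.sum_const]

lemma CJ : ∀ k, Cmat k * Jmat k = ((2:ℝ)^k)⁻¹ • Jmat k := by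
  intro k
  induction k with
  | zero =>
    ext i j
    simp [Cmat, Jmat, Matrix.mul_apply]
  | succ k ih =>
    rw [Cmat_succ, Jsplit, reindex_mul, Matrix.fromBlocks_multiply, reindex_smul]
    congr 1
    rw [Matrix.fromBlocks_smul]
    have hb : ∀ i j : Fin (2^k),
        (Cmat k * Jmat k + (-((1:ℝ)/2^(2*k+1)) • Jmat k) * Jmat k) i j
          = (((2:ℝ)^(k+1))⁻¹ • Jmat k) i j := by
      intro i j
      rw [ih, Matrix.smul_mul, JJ]
      have h2 : (2:ℝ)^k ≠ 0 := by positivity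
      simp only [Matrix.add_apply, Matrix.smul_apply, Jmat, Matrix.of_apply, smul_eq_mul,
        h2pow, pow_succ]
      field_simp
      ring
    have hA : Cmat k * Jmat k + -((1:ℝ)/2^(2*k+1)) • Jmat k * Jmat k
        = ((2:ℝ)^(k+1))⁻¹ • Jmat k := by
      ext i j; exact hb i j
    have hA' : -((1:ℝ)/2^(2*k+1)) • Jmat k * Jmat k + Cmat k * Jmat k
        = ((2:ℝ)^(k+1))⁻¹ • Jmat k := by rw [add_comm]; exact hA
    rw [hA, hA']

lemma JN : ∀ k, Jmat k * Nmat k = ((2:ℝ)^k) • Jmat k := by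
  intro k
  induction k with
  | zero =>
    ext i j
    simp [Nmat, Jmat, Matrix.mul_apply]
  | succ k ih =>
    rw [Jsplit, show Nmat (k+1) = Matrix.reindex (eqv k) (eqv k)
        (Matrix.fromBlocks (Nmat k + ((1:ℝ)/3) • Jmat k) (((2:ℝ)/3) • Jmat k)
          (((2:ℝ)/3) • Jmat k) (Nmat k + ((1:ℝ)/3) • Jmat k)) from rfl,
      reindex_mul, Matrix.fromBlocks_multiply, reindex_smul]
    congr 1
    rw [Matrix.fromBlocks_smul]
    have hb : ∀ i j : Fin (2^k),
        (Jmat k * (Nmat k + ((1:ℝ)/3) • Jmat k) + Jmat k * (((2:ℝ)/3) • Jmat k)) i j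
          = (((2:ℝ)^(k+1)) • Jmat k) i j := by
      intro i j
      rw [Matrix.mul_add, ih, Matrix.mul_smul, Matrix.mul_smul, JJ]
      simp only [Matrix.add_apply, Matrix.smul_apply, Jmat, Matrix.of_apply, smul_eq_mul,
        pow_succ]
      ring
    have hA : Jmat k * (Nmat k + ((1:ℝ)/3) • Jmat k) + Jmat k * (((2:ℝ)/3) • Jmat k)
        = ((2:ℝ)^(k+1)) • Jmat k := by
      ext i j; exact hb i j
    have hA' : Jmat k * (((2:ℝ)/3) • Jmat k) + Jmat k * (Nmat k + ((1:ℝ)/3) • Jmat k)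
        = ((2:ℝ)^(k+1)) • Jmat k := by rw [add_comm]; exact hA
    rw [hA, hA']

lemma CN : ∀ k, Cmat k * Nmat k = 1 := by
  intro k
  induction k with
  | zero =>
    ext i j
    have hij : i = j := by
      have hi := i.isLt; have hj := j.isLt
      norm_num at hi hj
      exact Fin.ext (by omega)
    rw [hij]
    simp [Cmat, Nmat, Matrix.mul_apply, Matrix.one_apply]
  | succ k ih =>
    rw [Cmat_succ, show Nmat (k+1) = Matrix.reindex (eqv k) (eqv k)
        (Matrix.fromBlocks (Nmat k + ((1:ℝ)/3) • Jmat k) (((2:ℝ)/3) • Jmat k)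
          (((2:ℝ)/3) • Jmat k) (Nmat k + ((1:ℝ)/3) • Jmat k)) from rfl,
      reindex_mul, Matrix.fromBlocks_multiply]
    have hP : Cmat k * (Nmat k + ((1:ℝ)/3) • Jmat k)
        + (-((1:ℝ)/2^(2*k+1)) • Jmat k) * (((2:ℝ)/3) • Jmat k) = 1 := by
      rw [Matrix.mul_add, ih, Matrix.mul_smul, CJ, Matrix.smul_mul, Matrix.mul_smul, JJ]
      have h2 : (2:ℝ)^k ≠ 0 := by positivity
      ext i j
      simp only [Matrix.add_apply, Matrix.smul_apply, Jmat, Matrix.of_apply, smul_eq_mul,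
        h2pow]
      have h0 : (1:ℝ)/3 * (((2:ℝ)^k)⁻¹ * 1) + -((1:ℝ)/(2^k*2^k*2)) * ((2:ℝ)/3 * ((2:ℝ)^k * 1)) = 0 := by
        field_simp
        ring
      rw [add_assoc, h0, add_zero]
    have hQ : Cmat k * (((2:ℝ)/3) • Jmat k)
        + (-((1:ℝ)/2^(2*k+1)) • Jmat k) * (Nmat k + ((1:ℝ)/3) • Jmat k) = 0 := by
      rw [Matrix.mul_smul, CJ, Matrix.smul_mul, Matrix.mul_add, JN, Matrix.mul_smul, JJ]
      have h2 : (2:ℝ)^k ≠ 0 := by positivity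
      ext i j
      simp only [Matrix.add_apply, Matrix.smul_apply, Jmat, Matrix.of_apply, smul_eq_mul,
        Matrix.zero_apply, h2pow]
      field_simp
      ring
    have hR : (-((1:ℝ)/2^(2*k+1)) • Jmat k) * (Nmat k + ((1:ℝ)/3) • Jmat k)
        + Cmat k * (((2:ℝ)/3) • Jmat k) = 0 := by
      rw [add_comm]; exact hQ
    have hS : (-((1:ℝ)/2^(2*k+1)) • Jmat k) * (((2:ℝ)/3) • Jmat k)
        + Cmat k * (Nmat k + ((1:ℝ)/3) • Jmat k) = 1 := by
      rw [add_comm]; exact hP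
    rw [hP, hQ, hR, hS, Matrix.fromBlocks_one]
    simp [reindex_apply]

lemma Ndiag : ∀ k (i : Fin (2^k)), Nmat k i i = 1 + (k:ℝ)/3 := by
  intro k
  induction k with
  | zero => intro i; simp [Nmat]
  | succ k ih =>
    intro i
    rw [show Nmat (k+1) = Matrix.reindex (eqv k) (eqv k)
        (Matrix.fromBlocks (Nmat k + ((1:ℝ)/3) • Jmat k) (((2:ℝ)/3) • Jmat k)
          (((2:ℝ)/3) • Jmat k) (Nmat k + ((1:ℝ)/3) • Jmat k)) from rfl]
    simp only [reindex_apply, submatrix_apply]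
    rcases (eqv k).symm i with a | a <;>
      · simp only [Matrix.fromBlocks_apply₁₁, Matrix.fromBlocks_apply₂₂, Matrix.add_apply,
          Matrix.smul_apply, Jmat, Matrix.of_apply, smul_eq_mul, ih]
        push_cast
        ring

theorem Cmat_inv_diag (k : ℕ) (hk : 1 ≤ k) (i : Fin (2^k)) :
    (Cmat k)⁻¹ i i = 1 + (k : ℝ) / 3 := by
  rw [Matrix.inv_eq_right_inv (CN k), Ndiag]
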